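/- Every element of Γ(A) can be written uniquely in the form s₁^{a₁}s₂^{a₂}⋯sₙ^{aₙ} with integers a₁,…,aₙ; i.e., the map ℤⁿ → Γ(A) sending (a₁,…,aₙ) to s₁^{a₁}s₂^{a₂}⋯sₙ^{aₙ} is a bijection. In particular, if s₁^{a₁}s₂^{a₂}⋯sₙ^{aₙ} is the identity motion of ℝⁿ, then a₁ = ⋯ = aₙ = 0. -/

import Mathlib

noncomputable def bottMotion {n : ℕ} (A : Matrix (Fin n) (Fin n) (ZMod 2)) (i : Fin n) :
    Equiv.Perm (Fin n → ℝ) where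
  toFun u := fun j => (-1 : ℝ) ^ (A i j).val * u j + if j = i then 2⁻¹ else 0
  invFun v := fun j => (-1 : ℝ) ^ (A i j).val * (v j - if j = i then 2⁻¹ else 0)
  left_inv u := by
    funext j
    have h : ((-1 : ℝ) ^ (A i j).val) * ((-1 : ℝ) ^ (A i j).val) = 1 := by
      rw [← pow_add]
      exact Even.neg_one_pow ⟨(A i j).val, rfl⟩
    dsimp only
    rw [add_sub_cancel_right, ← mul_assoc, h, one_mul]
  right_inv v := by
    funext j
    have h : ((-1 : ℝ) ^ (A i j).val) * ((-1 : ℝ) ^ (A i j).val) = 1 := by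
      rw [← pow_add]
      exact Even.neg_one_pow ⟨(A i j).val, rfl⟩
    dsimp only
    rw [← mul_assoc, h, one_mul, sub_add_cancel]

noncomputable def bottGroup {n : ℕ} (A : Matrix (Fin n) (Fin n) (ZMod 2)) :
    Subgroup (Equiv.Perm (Fin n → ℝ)) :=
  Subgroup.closure (Set.range (bottMotion A))

lemma negOne_val_mul (x y : ZMod 2) :
    ((-1:ℝ) ^ x.val) * ((-1:ℝ) ^ y.val) = (-1:ℝ) ^ ((x + y).val) := by
  obtain rfl | rfl : x = 0 ∨ x = 1 := by revert x; decide
  all_goals obtain rfl | rfl : y = 0 ∨ y = 1 := by revert y; decide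
  all_goals simp [show ((1:ZMod 2))+1 = 0 by decide, show ZMod.val (0 : ZMod 2) = 0 by decide,
      show ZMod.val (1 : ZMod 2) = 1 by decide]

lemma bottMotion_apply {n : ℕ} (A : Matrix (Fin n) (Fin n) (ZMod 2)) (j : Fin n)
    (u : Fin n → ℝ) (i : Fin n) :
    bottMotion A j u i = (-1 : ℝ) ^ (A j i).val * u i + if i = j then 2⁻¹ else 0 := rfl

lemma bottMotion_inv_apply {n : ℕ} (A : Matrix (Fin n) (Fin n) (ZMod 2)) (j : Fin n)
    (u : Fin n → ℝ) (i : Fin n) :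
    (bottMotion A j)⁻¹ u i
      = (-1 : ℝ) ^ (A j i).val * (u i - if i = j then 2⁻¹ else 0) := rfl

lemma bottMotion_zpow_apply {n : ℕ} (A : Matrix (Fin n) (Fin n) (ZMod 2)) (j : Fin n)
    (hjj : A j j = 0) (m : ℤ) (u : Fin n → ℝ) (i : Fin n) :
    (bottMotion A j ^ m) u i
      = (-1 : ℝ) ^ (((m : ZMod 2) * A j i).val) * u i + (if i = j then (m : ℝ) / 2 else 0) := by
  induction m using Int.induction_on generalizing u with
  | zero =>
    simp [show ZMod.val (0 : ZMod 2) = 0 by decide]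
  | succ k ih =>
    have h1 : (bottMotion A j ^ ((k : ℤ) + 1)) u = (bottMotion A j ^ (k : ℤ)) (bottMotion A j u) := by
      rw [zpow_add_one]; rfl
    rw [h1, ih, bottMotion_apply]
    by_cases hij : i = j
    · subst hij
      simp only [if_pos rfl, hjj, mul_zero]
      simp [show ZMod.val (0 : ZMod 2) = 0 by decide]
      push_cast; ring
    · simp only [if_neg hij, mul_zero, add_zero]
      rw [← mul_assoc, show ((-1:ℝ)^(A j i).val) = (-1:ℝ)^((A j i)).val from rfl]
      rw [mul_comm ((-1:ℝ) ^ (((k:ℤ) : ZMod 2) * A j i).val) ((-1:ℝ)^(A j i).val),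
        negOne_val_mul]
      have : A j i + ((k:ℤ) : ZMod 2) * A j i = (((k:ℤ)+1 : ℤ) : ZMod 2) * A j i := by
        push_cast; ring
      rw [this]
  | pred k ih =>
    have h1 : (bottMotion A j ^ (-(k : ℤ) - 1)) u
        = (bottMotion A j ^ (-(k : ℤ))) ((bottMotion A j)⁻¹ u) := by
      rw [zpow_sub_one]; rfl
    rw [h1, ih, bottMotion_inv_apply]
    by_cases hij : i = j
    · subst hij
      simp only [if_pos rfl, hjj, mul_zero]
      simp [show ZMod.val (0 : ZMod 2) = 0 by decide]
      push_cast; ring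
    · simp only [if_neg hij, sub_zero, add_zero]
      rw [← mul_assoc]
      have hsign : ((-1:ℝ) ^ ((((-(k:ℤ)) : ℤ) : ZMod 2) * A j i).val) * (-1:ℝ) ^ (A j i).val
          = (-1:ℝ) ^ ((((-(k:ℤ) - 1 : ℤ)) : ZMod 2) * A j i).val := by
        rw [negOne_val_mul]
        congr 1
        push_cast
        rw [CharTwo.sub_eq_add]
        ring
      rw [hsign]

lemma bottList_apply {n : ℕ} (A : Matrix (Fin n) (Fin n) (ZMod 2))
    (hA : ∀ i j : Fin n, j ≤ i → A i j = 0) (a : Fin n → ℤ) :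
    ∀ l : List (Fin n), l.Pairwise (· < ·) → ∀ (u : Fin n → ℝ) (i : Fin n),
      ((l.map fun j => bottMotion A j ^ a j).prod) u i
        = (-1 : ℝ) ^ ((l.map fun j => ((a j : ZMod 2) * A j i)).sum).val *
            (u i + if i ∈ l then (a i : ℝ) / 2 else 0) := by
  intro l
  induction l with
  | nil =>
    intro _ u i
    simp [show ZMod.val (0 : ZMod 2) = 0 by decide]
  | cons j l ih =>
    intro hp u i
    have h1 : ∀ k ∈ l, j < k := fun k hk => (List.pairwise_cons.mp hp).1 k hk
    have h2 : l.Pairwise (· < ·) := (List.pairwise_cons.mp hp).2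
    have hprod : ((List.map (fun j => bottMotion A j ^ a j) (j :: l)).prod) u
        = (bottMotion A j ^ a j) (((List.map (fun j => bottMotion A j ^ a j) l).prod) u) := by
      rw [List.map_cons, List.prod_cons]; rfl
    rw [hprod, bottMotion_zpow_apply A j (hA j j le_rfl), ih h2 u i]
    by_cases hij : i = j
    · subst hij
      have hnotmem : i ∉ l := fun h => lt_irrefl i (h1 i h)
      have hAii : A i i = 0 := hA i i le_rfl
      have hE : (l.map fun j => ((a j : ZMod 2) * A j i)).sum = 0 := by
        apply List.sum_eq_zero
        intro x hx
        rcases List.mem_map.mp hx with ⟨k, hk, rfl⟩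
        rw [hA k i (le_of_lt (h1 k hk)), mul_zero]
      simp [hnotmem, hE, hAii, show ZMod.val (0 : ZMod 2) = 0 by decide]
    · have hmem : (i ∈ j :: l) ↔ i ∈ l := by
        simp [List.mem_cons, hij]
      rw [if_neg hij, add_zero, List.map_cons, List.sum_cons, ← mul_assoc,
        negOne_val_mul]
      simp only [hmem]

noncomputable def bottP {n : ℕ} (A : Matrix (Fin n) (Fin n) (ZMod 2)) (a : Fin n → ℤ) :
    Equiv.Perm (Fin n → ℝ) :=
  (List.ofFn fun j => bottMotion A j ^ a j).prod

def bottE {n : ℕ} (A : Matrix (Fin n) (Fin n) (ZMod 2)) (a : Fin n → ℤ) (i : Fin n) : ZMod 2 :=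
  ∑ j, (a j : ZMod 2) * A j i

lemma bottP_apply {n : ℕ} (A : Matrix (Fin n) (Fin n) (ZMod 2))
    (hA : ∀ i j : Fin n, j ≤ i → A i j = 0) (a : Fin n → ℤ) (u : Fin n → ℝ) (i : Fin n) :
    bottP A a u i = (-1 : ℝ) ^ (bottE A a i).val * (u i + (a i : ℝ) / 2) := by
  have h := bottList_apply A hA a (List.finRange n) (List.pairwise_lt_finRange n) u i
  have hE : bottE A a i = (List.map (fun j => (a j : ZMod 2) * A j i) (List.finRange n)).sum :=
    Fin.sum_univ_def _
  rw [bottP, List.ofFn_eq_map, h, if_pos (List.mem_finRange i), hE]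

lemma zmod2_cases (x : ZMod 2) : x = 0 ∨ x = 1 := by revert x; decide

/-- the sign of a column, as an integer -/
def bsign {n : ℕ} (A : Matrix (Fin n) (Fin n) (ZMod 2)) (a : Fin n → ℤ) (i : Fin n) : ℤ :=
  if bottE A a i = 0 then 1 else -1

lemma bsign_cast_real {n : ℕ} (A : Matrix (Fin n) (Fin n) (ZMod 2)) (a : Fin n → ℤ)
    (i : Fin n) : ((bsign A a i : ℤ) : ℝ) = (-1 : ℝ) ^ (bottE A a i).val := by
  rcases zmod2_cases (bottE A a i) with h | h <;>
    simp [bsign, h, show ZMod.val (0 : ZMod 2) = 0 by decide,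
      show ZMod.val (1 : ZMod 2) = 1 by decide, show (1 : ZMod 2) ≠ 0 by decide]

lemma bsign_cast_zmod {n : ℕ} (A : Matrix (Fin n) (Fin n) (ZMod 2)) (a : Fin n → ℤ)
    (i : Fin n) : ((bsign A a i : ℤ) : ZMod 2) = 1 := by
  rcases zmod2_cases (bottE A a i) with h | h <;> simp [bsign, h] <;> decide

/-- composition law on the exponent vectors -/
def bcomp {n : ℕ} (A : Matrix (Fin n) (Fin n) (ZMod 2)) (a b : Fin n → ℤ) : Fin n → ℤ :=
  fun i => a i * bsign A b i + b i

lemma bottE_bcomp {n : ℕ} (A : Matrix (Fin n) (Fin n) (ZMod 2)) (a b : Fin n → ℤ)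
    (i : Fin n) : bottE A (bcomp A a b) i = bottE A a i + bottE A b i := by
  unfold bottE bcomp
  rw [← Finset.sum_add_distrib]
  apply Finset.sum_congr rfl
  intro j _
  push_cast
  rw [bsign_cast_zmod]
  ring

lemma bottP_mul {n : ℕ} (A : Matrix (Fin n) (Fin n) (ZMod 2))
    (hA : ∀ i j : Fin n, j ≤ i → A i j = 0) (a b : Fin n → ℤ) :
    bottP A a * bottP A b = bottP A (bcomp A a b) := by
  apply Equiv.ext
  intro u
  funext i
  have hmul : (bottP A a * bottP A b) u = bottP A a (bottP A b u) := rfl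
  rw [hmul, bottP_apply A hA, bottP_apply A hA, bottP_apply A hA]
  have hσ : (-1:ℝ) ^ (bottE A a i).val * (-1:ℝ) ^ (bottE A b i).val
      = (-1:ℝ) ^ (bottE A (bcomp A a b) i).val := by
    rw [negOne_val_mul, bottE_bcomp]
  have hsq : (-1:ℝ) ^ ((bottE A b i).val * 2) = 1 := by
    rw [pow_mul']; norm_num
  rw [← hσ]
  have hc : ((bcomp A a b i : ℤ) : ℝ)
      = (a i : ℝ) * (-1:ℝ) ^ (bottE A b i).val + (b i : ℝ) := by
    rw [← bsign_cast_real]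
    unfold bcomp
    push_cast
    ring
  rw [hc]
  set x := (-1:ℝ) ^ (bottE A a i).val
  set y := (-1:ℝ) ^ (bottE A b i).val
  linear_combination (-(x * (a i : ℝ)) / 2) * hsq

lemma bottP_zero {n : ℕ} (A : Matrix (Fin n) (Fin n) (ZMod 2))
    (hA : ∀ i j : Fin n, j ≤ i → A i j = 0) : bottP A 0 = 1 := by
  apply Equiv.ext
  intro u
  funext i
  rw [bottP_apply A hA]
  have hE : bottE A 0 i = 0 := by unfold bottE; simp
  simp [hE, show ZMod.val (0 : ZMod 2) = 0 by decide]

lemma bottP_injective {n : ℕ} (A : Matrix (Fin n) (Fin n) (ZMod 2))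
    (hA : ∀ i j : Fin n, j ≤ i → A i j = 0) : Function.Injective (bottP A) := by
  intro a b hab
  funext i
  have key : ∀ m : ℕ, ∀ i : Fin n, (i : ℕ) = m → a i = b i := by
    intro m
    induction m using Nat.strong_induction_on with
    | _ m ih =>
      intro i him
      have hE : bottE A a i = bottE A b i := by
        unfold bottE
        apply Finset.sum_congr rfl
        intro j _
        by_cases hj : j < i
        · rw [ih (j : ℕ) (him ▸ hj) j rfl]
        · rw [hA j i (le_of_not_gt hj), mul_zero, mul_zero]
      have h0 := congrFun (DFunLike.congr_fun hab (0 : Fin n → ℝ)) i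
      rw [bottP_apply A hA, bottP_apply A hA, hE] at h0
      have hne : ((-1:ℝ) ^ (bottE A b i).val) ≠ 0 := by
        apply pow_ne_zero; norm_num
      have := mul_left_cancel₀ hne h0
      have h2 : (a i : ℝ) = (b i : ℝ) := by
        simpa using this
      exact_mod_cast h2
  exact key (i : ℕ) i rfl

lemma bottP_single {n : ℕ} (A : Matrix (Fin n) (Fin n) (ZMod 2))
    (hA : ∀ i j : Fin n, j ≤ i → A i j = 0) (i : Fin n) :
    bottP A (Pi.single i 1) = bottMotion A i := by
  apply Equiv.ext
  intro u
  funext j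
  rw [bottP_apply A hA, bottMotion_apply]
  have hE : bottE A (Pi.single i 1) j = A i j := by
    unfold bottE
    rw [Finset.sum_eq_single i]
    · simp
    · intro k _ hk
      simp [Pi.single_apply, hk]
    · simp
  rw [hE]
  by_cases hji : j = i
  · subst hji
    rw [hA j j le_rfl]
    simp [show ZMod.val (0 : ZMod 2) = 0 by decide]
  · simp [Pi.single_apply, hji]

/-- every element of Γ(A) is uniquely of the form s₁^{a₁}⋯sₙ^{aₙ},
i.e. a ↦ s₁^{a₁}⋯sₙ^{aₙ} is a bijection from ℤⁿ onto Γ(A); in particular the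
product is the identity only when all aⱼ vanish. -/
theorem bott_normal_form {n : ℕ} (A : Matrix (Fin n) (Fin n) (ZMod 2))
    (hA : ∀ i j : Fin n, j ≤ i → A i j = 0) :
    Function.Injective (fun a : Fin n → ℤ => (List.ofFn fun j => bottMotion A j ^ a j).prod) ∧
    Set.range (fun a : Fin n → ℤ => (List.ofFn fun j => bottMotion A j ^ a j).prod) =
      (bottGroup A : Set (Equiv.Perm (Fin n → ℝ))) ∧
    ∀ a : Fin n → ℤ, (List.ofFn fun j => bottMotion A j ^ a j).prod = 1 → a = 0 := by
  have hinj : Function.Injective (bottP A) := bottP_injective A hA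
  have hP1 : bottP A 0 = 1 := bottP_zero A hA
  let K : Subgroup (Equiv.Perm (Fin n → ℝ)) :=
    { carrier := Set.range (bottP A)
      one_mem' := ⟨0, hP1⟩
      mul_mem' := by
        rintro x y ⟨a, rfl⟩ ⟨b, rfl⟩
        exact ⟨bcomp A a b, (bottP_mul A hA a b).symm⟩
      inv_mem' := by
        rintro x ⟨a, rfl⟩
        set d : Fin n → ℤ := fun i => -(a i) * bsign A a i with hd
        have hEd : ∀ i, bottE A d i = bottE A a i := by
          intro i
          unfold bottE
          apply Finset.sum_congr rfl
          intro j _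
          congr 1
          show ((-(a j) * bsign A a j : ℤ) : ZMod 2) = ((a j : ℤ) : ZMod 2)
          push_cast
          rw [bsign_cast_zmod, CharTwo.neg_eq]
          ring
        have hcomp : bcomp A a d = 0 := by
          funext i
          have hbs : bsign A d i = bsign A a i := by unfold bsign; rw [hEd i]
          show a i * bsign A d i + d i = 0
          rw [hbs]
          show a i * bsign A a i + (-(a i) * bsign A a i) = 0
          ring
        have hone : bottP A a * bottP A d = 1 := by
          rw [bottP_mul A hA, hcomp, hP1]
        exact ⟨d, eq_inv_of_mul_eq_one_right hone⟩ }
  refine ⟨hinj, ?_, ?_⟩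
  · apply Set.Subset.antisymm
    · rintro x ⟨a, rfl⟩
      show bottP A a ∈ Subgroup.closure (Set.range (bottMotion A))
      apply Subgroup.list_prod_mem
      intro x hx
      obtain ⟨j, rfl⟩ := List.mem_ofFn.mp hx
      exact Subgroup.zpow_mem _ (Subgroup.subset_closure (Set.mem_range_self j)) _
    · have hle : Subgroup.closure (Set.range (bottMotion A)) ≤ K := by
        apply (Subgroup.closure_le K).mpr
        rintro _ ⟨i, rfl⟩
        exact ⟨Pi.single i 1, bottP_single A hA i⟩
      intro x hx
      exact hle hx
  · intro a ha
    have : bottP A a = bottP A 0 := by rw [hP1]; exact ha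
    exact hinj this
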